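/- arXiv:2210.09223 — 3 statements merged into one kernel-verified Lean document; each statement's English description precedes it below -/
import Mathlib

section
/- Let H ∈ ℝ^{d×d} be symmetric positive definite and w* ∈ ℝ^d. For a fixed index i, the minimizer of (1/2)δᵀHδ subject to the constraint e_iᵀδ + e_iᵀw* = 0 is δ* = -(w*_i / (H⁻¹)_{ii}) H⁻¹ e_i, and the minimal value equals (w*_i)² / (2 (H⁻¹)_{ii}). -/
open Matrix

lemma posdef_dot_pos {d : ℕ} {M : Matrix (Fin d) (Fin d) ℝ} (hM : M.PosDef)
    {x : Fin d → ℝ} (hx : x ≠ 0) : 0 < x ⬝ᵥ M.mulVec x := by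
  simpa using hM.re_dotProduct_pos hx

lemma posdef_dot_nonneg {d : ℕ} {M : Matrix (Fin d) (Fin d) ℝ} (hM : M.PosDef)
    (x : Fin d → ℝ) : 0 ≤ x ⬝ᵥ M.mulVec x := by
  rcases eq_or_ne x 0 with h | h
  · simp [h]
  · exact (posdef_dot_pos hM h).le

lemma dot_mulVec_symm {d : ℕ} {M : Matrix (Fin d) (Fin d) ℝ} (hs : Mᵀ = M)
    (x y : Fin d → ℝ) : x ⬝ᵥ M.mulVec y = y ⬝ᵥ M.mulVec x := by
  calc x ⬝ᵥ M.mulVec y = (x ᵥ* M) ⬝ᵥ y := Matrix.dotProduct_mulVec x M y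
    _ = (Mᵀ.mulVec x) ⬝ᵥ y := by rw [← Matrix.mulVec_transpose]
    _ = (M.mulVec x) ⬝ᵥ y := by rw [hs]
    _ = y ⬝ᵥ M.mulVec x := dotProduct_comm _ _

/-- OBS single-weight pruning: for symmetric positive definite `H` and index `i`,
the minimizer of `(1/2) δᵀ H δ` subject to `eᵢᵀ δ + eᵢᵀ w* = 0` is
`δ* = -(w*ᵢ / (H⁻¹)ᵢᵢ) H⁻¹ eᵢ`, with minimal value `(w*ᵢ)² / (2 (H⁻¹)ᵢᵢ)`. -/
theorem obs_single_weight {d : ℕ} (H : Matrix (Fin d) (Fin d) ℝ)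
    (hH : H.PosDef) (w : Fin d → ℝ) (i : Fin d) :
    let δstar : Fin d → ℝ := (-(w i / H⁻¹ i i)) • H⁻¹.mulVec (Pi.single i 1)
    δstar i + w i = 0 ∧
    (1 / 2 : ℝ) * (δstar ⬝ᵥ H.mulVec δstar) = (w i) ^ 2 / (2 * H⁻¹ i i) ∧
    ∀ δ : Fin d → ℝ, δ i + w i = 0 →
      (1 / 2 : ℝ) * (δstar ⬝ᵥ H.mulVec δstar) ≤ (1 / 2 : ℝ) * (δ ⬝ᵥ H.mulVec δ) := by
  intro δstar
  have hinv : H⁻¹.PosDef := hH.inv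
  have ha : 0 < H⁻¹ i i := by
    have h := posdef_dot_pos hinv (x := Pi.single i 1) (by
      intro h
      have := congrFun h i
      simp at this)
    simpa [dotProduct, mulVec, Pi.single_apply] using h
  have ha' : H⁻¹ i i ≠ 0 := ha.ne'
  have hdet : IsUnit H.det := hH.isUnit.map (Matrix.detMonoidHom (n := Fin d) (R := ℝ))
  have hHinv : H * H⁻¹ = 1 := Matrix.mul_nonsing_inv H hdet
  have hmul : H.mulVec (H⁻¹.mulVec (Pi.single i 1)) = Pi.single i 1 := by
    rw [Matrix.mulVec_mulVec, hHinv, Matrix.one_mulVec]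
  have hδi : δstar i = -(w i) := by
    have h0 : (H⁻¹.mulVec (Pi.single i 1)) i = H⁻¹ i i := by
      simp [mulVec, dotProduct, Pi.single_apply]
    simp only [δstar, Pi.smul_apply, smul_eq_mul, h0]
    rw [neg_mul, div_mul_cancel₀ _ ha']
  have hval : δstar ⬝ᵥ H.mulVec δstar = (w i) ^ 2 / H⁻¹ i i := by
    have h1 : (H⁻¹.mulVec (Pi.single i 1)) ⬝ᵥ H.mulVec (H⁻¹.mulVec (Pi.single i 1))
        = H⁻¹ i i := by
      rw [hmul]
      simp [dotProduct, mulVec, Pi.single_apply]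
    simp only [δstar, Matrix.mulVec_smul, smul_dotProduct, dotProduct_smul, smul_eq_mul, h1]
    generalize hA : H⁻¹ i i = a at ha' ⊢
    field_simp
  refine ⟨by rw [hδi]; ring, by rw [hval]; ring, ?_⟩
  intro δ hδ
  have hc : δ i = -(w i) := by linarith
  set u : Fin d → ℝ := δ - δstar with hu
  have hui : u i = 0 := by simp [hu, hc, hδi]
  have hsymH : Hᵀ = H := hH.isHermitian
  have hcross : δstar ⬝ᵥ H.mulVec u = 0 := by
    rw [dot_mulVec_symm hsymH]
    have h2 : H.mulVec δstar = (-(w i / H⁻¹ i i)) • (Pi.single i 1 : Fin d → ℝ) := by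
      simp only [δstar, Matrix.mulVec_smul, hmul]
    rw [h2]
    simp [dotProduct, Pi.single_apply, hui]
  have hcross' : u ⬝ᵥ H.mulVec δstar = 0 := by
    rw [dot_mulVec_symm hsymH]
    exact hcross
  have hδeq : δ = δstar + u := by simp [hu]
  have hexp : δ ⬝ᵥ H.mulVec δ
      = δstar ⬝ᵥ H.mulVec δstar + u ⬝ᵥ H.mulVec u := by
    rw [hδeq, Matrix.mulVec_add, dotProduct_add, add_dotProduct, add_dotProduct,
      hcross, hcross']
    ring
  have hnn : 0 ≤ u ⬝ᵥ H.mulVec u := posdef_dot_nonneg hH u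
  rw [hexp]
  linarith
end

section
/- Let g_1,...,g_m ∈ ℝ^d, w* ∈ ℝ^d, F = (1/m)∑_i g_i g_iᵀ assumed positive definite (or dampened to be so), and k ≤ d. For a set Q of k indices, define ρ_Q = (1/2)(w*_Q)ᵀ((F⁻¹)_{[Q,Q]})⁻¹ w*_Q. Then min over w' ∈ ℝ^d with w'_q = 0 for all q ∈ Q of (1/(2m)) ∑_i (g_iᵀw' − g_iᵀw*)² equals ρ_Q. Consequently, a vector w' with at least k zeros minimizing the squared error over all such vectors has support complement Q* minimizing ρ_Q over sets Q of size k. -/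
/-!
Since `F` is the empirical Gram matrix of the `gᵢ`, the regression loss is the quadratic form
`½ (w' - w*)ᵀ F (w' - w*)`. Vanishing on `Q` is the linear constraint `E δ = -w*_Q` on
`δ = w' - w*`, where `E` selects the rows in `Q`. A positive definite form `δᵀ F δ` under
`E δ = c` is minimized at the Lagrange point `δ₀ = F⁻¹ Eᵀ (E F⁻¹ Eᵀ)⁻¹ c` with value
`cᵀ (E F⁻¹ Eᵀ)⁻¹ c`, and `E F⁻¹ Eᵀ = (F⁻¹)_{[Q,Q]}`. The second claim follows because a global
minimizer attains the constrained minimum for its own `Q`, which is thus the smallest one.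
-/

open Matrix

namespace Matrix

variable {n ι : Type*} [Fintype n]

theorem dotProduct_sum_vecMulVec_self_mulVec {R : Type*} [CommSemiring R] {m : Type*} [Fintype m]
    (g : m → n → R) (v : n → R) :
    v ⬝ᵥ (∑ i, vecMulVec (g i) (g i)) *ᵥ v = ∑ i, (g i ⬝ᵥ v) ^ 2 := by
  rw [sum_mulVec, dotProduct_sum]
  refine Finset.sum_congr rfl fun i _ => ?_
  rw [vecMulVec_mulVec, op_smul_eq_smul, dotProduct_smul, smul_eq_mul, dotProduct_comm, sq]

theorem IsSymm.dotProduct_mulVec_comm {R : Type*} [CommSemiring R] {A : Matrix n n R}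
    (hA : A.IsSymm) (x y : n → R) : x ⬝ᵥ A *ᵥ y = y ⬝ᵥ A *ᵥ x := by
  rw [dotProduct_mulVec, ← mulVec_transpose, hA.eq, dotProduct_comm]

theorem one_submatrix_mulVec {R : Type*} [NonAssocSemiring R] [DecidableEq n] (e : ι → n)
    (v : n → R) : (1 : Matrix n n R).submatrix e id *ᵥ v = fun q => v (e q) := by
  ext q
  simp [mulVec, dotProduct, one_apply]

theorem one_submatrix_mul_mul_transpose {R : Type*} [NonAssocSemiring R] [DecidableEq n]
    (e : ι → n) (B : Matrix n n R) :
    (1 : Matrix n n R).submatrix e id * B * ((1 : Matrix n n R).submatrix e id)ᵀ =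
      B.submatrix e e := by
  ext a b
  simp [mul_apply, one_apply]

variable [DecidableEq n] [Fintype ι] [DecidableEq ι]

theorem PosDef.isLeast_dotProduct_mulVec_of_mulVec_eq {F : Matrix n n ℝ} (hF : F.PosDef)
    (E : Matrix ι n ℝ) (hE : IsUnit (E * F⁻¹ * Eᵀ).det) (c : ι → ℝ) :
    IsLeast {t | ∃ x, E *ᵥ x = c ∧ t = x ⬝ᵥ F *ᵥ x} (c ⬝ᵥ (E * F⁻¹ * Eᵀ)⁻¹ *ᵥ c) := by
  set P := E * F⁻¹ * Eᵀ
  set x₀ := F⁻¹ *ᵥ Eᵀ *ᵥ P⁻¹ *ᵥ c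
  have hFx₀ : F *ᵥ x₀ = Eᵀ *ᵥ P⁻¹ *ᵥ c := by
    rw [mulVec_mulVec, mul_nonsing_inv _ ((isUnit_iff_isUnit_det F).mp hF.isUnit), one_mulVec]
  -- `F x₀ = Eᵀ λ` is the Lagrange condition: `x ⬝ᵥ F x₀` is the same for every feasible `x`.
  have hcross : ∀ x, E *ᵥ x = c → x ⬝ᵥ F *ᵥ x₀ = c ⬝ᵥ P⁻¹ *ᵥ c := by
    intro x hx
    rw [hFx₀, dotProduct_mulVec, vecMul_transpose, hx]
  have hEx₀ : E *ᵥ x₀ = c := by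
    rw [mulVec_mulVec, mulVec_mulVec, mulVec_mulVec]
    exact (congrArg (· *ᵥ c) (mul_nonsing_inv P hE)).trans (one_mulVec c)
  refine ⟨⟨x₀, hEx₀, (hcross x₀ hEx₀).symm⟩, ?_⟩
  rintro _ ⟨x, hx, rfl⟩
  have hexpand : x ⬝ᵥ F *ᵥ x = (x - x₀) ⬝ᵥ F *ᵥ (x - x₀) + c ⬝ᵥ P⁻¹ *ᵥ c := by
    have hswap := (isHermitian_iff_isSymm.mp hF.isHermitian).dotProduct_mulVec_comm x₀ x
    simp only [mulVec_sub, dotProduct_sub, sub_dotProduct, hcross x hx, hcross x₀ hEx₀] at hswap ⊢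
    linarith
  have hnonneg := hF.posSemidef.dotProduct_mulVec_nonneg (x - x₀)
  rw [star_trivial] at hnonneg
  linarith

theorem PosDef.isLeast_dotProduct_mulVec_sub_of_apply_eq_zero {F : Matrix n n ℝ} (hF : F.PosDef)
    {e : ι → n} (he : Function.Injective e) (w : n → ℝ) :
    IsLeast {t | ∃ w', (∀ q, w' (e q) = 0) ∧ t = (w' - w) ⬝ᵥ F *ᵥ (w' - w)}
      ((fun q => w (e q)) ⬝ᵥ ((F⁻¹).submatrix e e)⁻¹ *ᵥ (fun q => w (e q))) := by
  have hE : IsUnit ((F⁻¹).submatrix e e).det :=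
    (isUnit_iff_isUnit_det _).mp (hF.inv.submatrix he).isUnit
  have h := hF.isLeast_dotProduct_mulVec_of_mulVec_eq ((1 : Matrix n n ℝ).submatrix e id)
    (by rwa [one_submatrix_mul_mul_transpose]) (-fun q => w (e q))
  simp only [one_submatrix_mul_mul_transpose, one_submatrix_mulVec, neg_dotProduct, mulVec_neg,
    dotProduct_neg, neg_neg] at h
  convert h using 1
  ext t
  constructor
  · rintro ⟨w', hw', rfl⟩
    exact ⟨w' - w, funext fun q => by simp [hw' q], rfl⟩
  · rintro ⟨x, hx, rfl⟩
    refine ⟨x + w, fun q => ?_, by rw [add_sub_cancel_right]⟩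
    simp [congrFun hx q]

end Matrix

/-- Theorem 1 (oViT): the constrained sparse regression problem
`min_{w' zero on Q} (1/(2m)) ∑ᵢ (gᵢᵀ w' - gᵢᵀ w*)²` has minimum value equal to the
Fisher-based group-OBS saliency `ρ_Q = (1/2) w*_Qᵀ ((F⁻¹)_{[Q,Q]})⁻¹ w*_Q`.
Consequently, a vector with at least `k` zeros minimizing the squared error has
support complement minimizing `ρ_Q` over index sets `Q` of size `k`. -/
theorem sparse_regression_eq_group_obs {d m k : ℕ}
    (g : Fin m → (Fin d → ℝ)) (w : Fin d → ℝ)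
    (F : Matrix (Fin d) (Fin d) ℝ)
    (hFdef : F = ((m : ℝ)⁻¹) • ∑ i : Fin m, vecMulVec (g i) (g i))
    (hF : F.PosDef) :
    let G : (Fin d → ℝ) → ℝ :=
      fun w' => (1 / (2 * (m : ℝ))) * ∑ i : Fin m, (g i ⬝ᵥ w' - g i ⬝ᵥ w) ^ 2
    let ρ : (Fin k ↪ Fin d) → ℝ :=
      fun e => (1 / 2 : ℝ) * ((fun q => w (e q)) ⬝ᵥ
        (((F⁻¹).submatrix e e)⁻¹).mulVec (fun q => w (e q)))
    (∀ e : Fin k ↪ Fin d,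
      IsLeast {v : ℝ | ∃ w' : Fin d → ℝ, (∀ q, w' (e q) = 0) ∧ v = G w'} (ρ e)) ∧
    (∀ (w'' : Fin d → ℝ) (e'' : Fin k ↪ Fin d), (∀ q, w'' (e'' q) = 0) →
      (∀ (w' : Fin d → ℝ) (e' : Fin k ↪ Fin d), (∀ q, w' (e' q) = 0) → G w'' ≤ G w') →
      ∀ e' : Fin k ↪ Fin d, ρ e'' ≤ ρ e') := by
  intro G ρ
  have hG : ∀ w', G w' = 1 / 2 * ((w' - w) ⬝ᵥ F *ᵥ (w' - w)) := by
    intro w'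
    simp only [G, hFdef, smul_mulVec, dotProduct_smul, dotProduct_sum_vecMulVec_self_mulVec,
      dotProduct_sub, smul_eq_mul]
    ring
  have hmin : ∀ e : Fin k ↪ Fin d,
      IsLeast {v : ℝ | ∃ w' : Fin d → ℝ, (∀ q, w' (e q) = 0) ∧ v = G w'} (ρ e) := by
    intro e
    obtain ⟨⟨w₀, hw₀, hval⟩, hlower⟩ :=
      hF.isLeast_dotProduct_mulVec_sub_of_apply_eq_zero e.injective w
    refine ⟨⟨w₀, hw₀, by rw [hG, ← hval]⟩, ?_⟩
    rintro _ ⟨w', hw', rfl⟩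
    rw [hG]
    exact mul_le_mul_of_nonneg_left (hlower ⟨w', hw', rfl⟩) (by norm_num)
  refine ⟨hmin, fun w'' e'' hw'' hglobal e' => ?_⟩
  obtain ⟨⟨w', hw', hval⟩, -⟩ := hmin e'
  calc ρ e'' ≤ G w'' := (hmin e'').2 ⟨w'', hw'', rfl⟩
    _ ≤ G w' := hglobal w' e' hw'
    _ = ρ e' := hval.symm
end

section
/- Let H be symmetric positive definite. For indices i ≠ j, let ρ_{{i,j}} be the group-OBS saliency of pruning {i,j} jointly and ρ_i, ρ_j the single-weight saliencies. Then ρ_{{i,j}} ≥ max(ρ_i, ρ_j), and if (H⁻¹)_{ij} = 0 then ρ_{{i,j}} = ρ_i + ρ_j. -/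
open Matrix

/-! The joint saliency is half the quadratic form of the inverse of the principal `2 × 2` block
`!![a, b; b, c]` of `H⁻¹`, which is `(c x² - 2bxy + a y²) / (ac - b²)`. Its excess over the
single saliency `x² / a` is `(bx - ay)² / (a (ac - b²)) ≥ 0`, and for `b = 0` the form splits as
`x² / a + y² / c`. -/

theorem Matrix.dotProduct_inv_fin_two_of_mulVec {K : Type*} [Field K] (a b c d x y : K) :
    ![x, y] ⬝ᵥ (!![a, b; c, d]⁻¹ *ᵥ ![x, y]) =
      (d * x ^ 2 - (b + c) * x * y + a * y ^ 2) / (a * d - b * c) := by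
  rw [inv_def, adjugate_fin_two_of, det_fin_two_of, Ring.inverse_eq_inv', smul_mulVec,
    dotProduct_smul, mulVec_fin_two, vec2_dotProduct, smul_eq_mul]
  simp only [of_apply, cons_val', cons_val_zero, cons_val_one, empty_val', cons_val_fin_one]
  ring

theorem Matrix.PosDef.principal_fin_two {n R : Type*} [CommRing R] [PartialOrder R] [StarRing R]
    {M : Matrix n n R} (hM : M.PosDef) {i j : n} (hij : i ≠ j) :
    (!![M i i, M i j; M j i, M j j]).PosDef := by
  convert hM.submatrix (injective_pair_iff_ne.mpr hij)
  ext k l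
  fin_cases k <;> fin_cases l <;> rfl

theorem sq_div_le_quadratic_div_det {K : Type*} [Field K] [LinearOrder K] [IsStrictOrderedRing K]
    {a b c : K} (x y : K) (ha : 0 < a) (hdet : 0 < a * c - b ^ 2) :
    x ^ 2 / a ≤ (c * x ^ 2 - 2 * b * x * y + a * y ^ 2) / (a * c - b ^ 2) := by
  rw [div_le_div_iff₀ ha hdet]
  nlinarith [sq_nonneg (b * x - a * y)]

/-- Joint saliency of pruning two weights: `ρ_{i,j} ≥ max(ρᵢ, ρⱼ)`, and if
`(H⁻¹)ᵢⱼ = 0` (uncorrelated weights) then `ρ_{i,j} = ρᵢ + ρⱼ`. Here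
`ρ_{i,j} = (1/2) w*_{ij}ᵀ ((H⁻¹)_{[{i,j},{i,j}]})⁻¹ w*_{ij}` and
`ρᵢ = w*ᵢ²/(2(H⁻¹)ᵢᵢ)`. -/
theorem joint_saliency_two_weights {d : ℕ} (H : Matrix (Fin d) (Fin d) ℝ)
    (hH : H.PosDef) (w : Fin d → ℝ) (i j : Fin d) (hij : i ≠ j) :
    let Minv : Matrix (Fin 2) (Fin 2) ℝ :=
      !![H⁻¹ i i, H⁻¹ i j; H⁻¹ j i, H⁻¹ j j]
    let ρij : ℝ := (1 / 2 : ℝ) * (![w i, w j] ⬝ᵥ (Minv⁻¹).mulVec ![w i, w j])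
    let ρi : ℝ := (w i) ^ 2 / (2 * H⁻¹ i i)
    let ρj : ℝ := (w j) ^ 2 / (2 * H⁻¹ j j)
    max ρi ρj ≤ ρij ∧ (H⁻¹ i j = 0 → ρij = ρi + ρj) := by
  intro Minv ρij ρi ρj
  have hP : (H⁻¹).PosDef := hH.inv
  have hsym : H⁻¹ j i = H⁻¹ i j := congrFun (congrFun hP.isHermitian.eq i) j
  have hMinv : Minv.PosDef := hP.principal_fin_two hij
  set a := H⁻¹ i i
  set b := H⁻¹ i j
  set c := H⁻¹ j j
  have hdet : 0 < a * c - b ^ 2 := by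
    simpa [Minv, det_fin_two_of, hsym, sq] using hMinv.det_pos
  have hρij : ρij = (c * w i ^ 2 - 2 * b * w i * w j + a * w j ^ 2) / (a * c - b ^ 2) / 2 := by
    simp only [ρij, Minv, dotProduct_inv_fin_two_of_mulVec, hsym]
    ring
  have ha : 0 < a := hP.diag_pos
  have hc : 0 < c := hP.diag_pos
  refine ⟨max_le ?_ ?_, fun hb => ?_⟩
  · calc ρi = w i ^ 2 / a / 2 := by rw [div_div, mul_comm]
      _ ≤ _ := div_le_div_of_nonneg_right (sq_div_le_quadratic_div_det _ _ ha hdet) zero_le_two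
      _ = ρij := hρij.symm
  · calc ρj = w j ^ 2 / c / 2 := by rw [div_div, mul_comm]
      _ ≤ (a * w j ^ 2 - 2 * b * w j * w i + c * w i ^ 2) / (c * a - b ^ 2) / 2 :=
        div_le_div_of_nonneg_right
          (sq_div_le_quadratic_div_det _ _ hc (by rwa [mul_comm])) zero_le_two
      _ = ρij := by rw [hρij]; ring
  · show ρij = w i ^ 2 / (2 * a) + w j ^ 2 / (2 * c)
    rw [hρij, hb]
    field_simp
    ring
end
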